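/- arXiv:1810.11899 — 3 statements merged into one kernel-verified Lean document; each statement's English description precedes it below -/
import Mathlib

section
/- Fix reals η > 1, d > 0, and C > 0, and define for each positive integer p the cost T(p) = (C/(1-(1-1/η)^p) + (4 + 3/(η-1))·d·C/p). Let T(1) be this expression with p = 1, which simplifies to (η + d·(4 + 3/(η-1)))·C. Then for any ε > 0 and any positive integer p with p ≤ ε·d·(4 + 3/(η-1)) − η, the speedup T(1)/T(p) is at least p/(1+ε). -/
/-!
By Bernoulli, `(1 - 1/η)^p (1 + p/η) ≤ (1 - 1/η)^p (1 + 1/η)^p ≤ 1`, so the dashboard term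
`C / (1 - (1 - 1/η)^p)` is at most `C (η + p) / p`. Writing `K = (4 + 3/(η-1)) d`, this gives
`T(p) ≤ C (η + p + K) / p`, hence `T(1) / T(p) ≥ p (η + K) / (η + p + K)`, and the last
quantity is at least `p / (1 + ε)` as soon as `p ≤ ε (η + K)`.
-/

lemma one_sub_pow_mul_one_add_mul_le_one {R : Type*} [CommRing R] [LinearOrder R]
    [IsStrictOrderedRing R] {x : R} (hx₀ : 0 ≤ x) (hx₁ : x ≤ 1) (n : ℕ) :
    (1 - x) ^ n * (1 + n * x) ≤ 1 :=
  calc (1 - x) ^ n * (1 + n * x) ≤ (1 - x) ^ n * (1 + x) ^ n := by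
        gcongr
        exact one_add_mul_le_pow (by linarith) n
    _ = (1 - x ^ 2) ^ n := by rw [← mul_pow]; ring
    _ ≤ 1 := pow_le_one₀ (by nlinarith) (by nlinarith)

lemma div_add_le_one_sub_one_sub_inv_pow {η : ℝ} (hη : 1 ≤ η) (n : ℕ) :
    n / (η + n) ≤ 1 - (1 - 1 / η) ^ n := by
  have hη₀ : 0 < η := by linarith
  have key := one_sub_pow_mul_one_add_mul_le_one (x := 1 / η) (by positivity)
    ((div_le_one hη₀).mpr hη) n
  have hsplit : (n : ℝ) / (η + n) = 1 - η / (η + n) := by field_simp; ring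
  have hfactor : (1 : ℝ) + n * (1 / η) = (η + n) / η := by field_simp
  rw [hfactor, ← le_div_iff₀ (by positivity), one_div_div] at key
  linarith

/-- The per-vertex cost `T(p)` of the sampler, with `K = (4 + 3/(η-1)) d`. -/
noncomputable def frontierCost (η K C : ℝ) (p : ℕ) : ℝ :=
  C / (1 - (1 - 1 / η) ^ p) + K * C / p

section frontierCost

variable {η K C : ℝ} {p : ℕ}

lemma frontierCost_pos (hη : 1 ≤ η) (hK : 0 ≤ K) (hC : 0 < C) (hp : 0 < p) :
    0 < frontierCost η K C p := by
  have hdash : 0 < 1 - (1 - 1 / η) ^ p :=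
    (div_pos (by exact_mod_cast hp) (by positivity)).trans_le
      (div_add_le_one_sub_one_sub_inv_pow hη p)
  unfold frontierCost
  positivity

lemma frontierCost_le (hη : 1 ≤ η) (hC : 0 < C) (hp : 0 < p) :
    frontierCost η K C p ≤ C * (η + p + K) / p := by
  have hdash : C / (1 - (1 - 1 / η) ^ p) ≤ C * (η + p) / p :=
    calc C / (1 - (1 - 1 / η) ^ p) ≤ C / (p / (η + p)) :=
          div_le_div_of_nonneg_left hC.le (by positivity)
            (div_add_le_one_sub_one_sub_inv_pow hη p)
      _ = C * (η + p) / p := by field_simp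
  calc frontierCost η K C p ≤ C * (η + p) / p + K * C / p := by
        unfold frontierCost; linarith
    _ = C * (η + p + K) / p := by ring

lemma mul_div_le_div_frontierCost (hη : 1 ≤ η) (hK : 0 ≤ K) (hC : 0 < C) (hp : 0 < p) :
    p * (η + K) / (η + p + K) ≤ (η + K) * C / frontierCost η K C p := by
  rw [div_le_div_iff₀ (by positivity) (frontierCost_pos hη hK hC hp)]
  calc p * (η + K) * frontierCost η K C p ≤ p * (η + K) * (C * (η + p + K) / p) := by
        gcongr
        exact frontierCost_le hη hC hp
    _ = (η + K) * C * (η + p + K) := by field_simp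

end frontierCost

/-- Theorem 1: near-linear scalability of the parallel dashboard-based frontier
sampler. -/
theorem sampler_scalability (η d C ε : ℝ) (hη : 1 < η) (hd : 0 < d) (hC : 0 < C)
    (hε : 0 < ε) (p : ℕ) (hp : 1 ≤ p)
    (hple : (p : ℝ) ≤ ε * d * (4 + 3 / (η - 1)) - η) :
    ((η + d * (4 + 3 / (η - 1))) * C) /
      (C / (1 - (1 - 1 / η) ^ p) + (4 + 3 / (η - 1)) * d * C / p)
        ≥ (p : ℝ) / (1 + ε) := by
  set K := (4 + 3 / (η - 1)) * d
  have hK : 0 < K := mul_pos (by have := sub_pos.mpr hη; positivity) hd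
  have hp_le : (p : ℝ) ≤ ε * (η + K) := by nlinarith
  rw [ge_iff_le, mul_comm d]
  calc (p : ℝ) / (1 + ε) ≤ p * (η + K) / (η + p + K) := by
        rw [div_le_div_iff₀ (by positivity) (by positivity)]
        nlinarith
    _ ≤ (η + K) * C / frontierCost η K C p :=
        mul_div_le_div_frontierCost hη.le hK.le hC hp
end

section
/- Let n, d, f, S > 0 be reals and p a positive integer with p ≤ 4f/d and 2nd ≤ S. Define g(Q_v, Q_f) = 2·Q_f·n·d + 8·Q_v·n·f·γ(Q_v) for a function γ with 1/Q_v ≤ γ(Q_v) ≤ 1 and γ(1) = 1. Consider the feasible set F = {(Q_v, Q_f) ∈ ℤ⁺×ℤ⁺ : Q_v·Q_f ≥ p and 8nf·γ(Q_v)/Q_f ≤ S}. Then the point (1, Q_f*) with Q_f* = max{p, ⌈8nf/S⌉} is feasible and satisfies g(1, Q_f*) ≤ 2·inf over F of g. -/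
/-!
Every feasible `(Q_v, Q_f)` has `Q_f ≥ 1` and `Q_v γ(Q_v) ≥ 1`, so its volume is at least
`2nd + 8nf`. On the other hand `Q_f* = max p ⌈8nf/S⌉` satisfies `2 Q_f* n d ≤ 8nf + 2nd`: for
`p` because `p d ≤ 4f`, and for the ceiling because it exceeds `8nf/S` by less than one and
`2nd ≤ S`. Hence `g(1, Q_f*) = 2 Q_f* n d + 8nf ≤ 2 (2nd + 8nf)`.
-/

/-- The paper's `g(Q_v, Q_f)`. -/
def commVolume (n d f : ℝ) (γ : ℕ → ℝ) (Qv Qf : ℕ) : ℝ :=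
  2 * (Qf : ℝ) * n * d + 8 * (Qv : ℝ) * n * f * γ Qv

lemma div_le_of_natCeil_div_le {a S : ℝ} {m : ℕ} (hS : 0 < S) (h : ⌈a / S⌉₊ ≤ m) :
    a / m ≤ S := by
  rcases m.eq_zero_or_pos with rfl | hm
  · simpa using hS.le
  have hm' : (0 : ℝ) < m := by exact_mod_cast hm
  have haS : a / S ≤ m := (Nat.le_ceil _).trans (by exact_mod_cast h)
  rw [div_le_iff₀ hm', mul_comm]
  exact (div_le_iff₀ hS).mp haS

lemma natCeil_div_mul_le {a b S : ℝ} (ha : 0 ≤ a) (hb : 0 ≤ b) (hbS : b ≤ S) :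
    ⌈a / S⌉₊ * b ≤ a + b := by
  rcases (hb.trans hbS).eq_or_lt with rfl | hS
  · simpa using add_nonneg ha hb
  have hbS' : b / S ≤ 1 := (div_le_one hS).mpr hbS
  calc ⌈a / S⌉₊ * b ≤ (a / S + 1) * b :=
        mul_le_mul_of_nonneg_right (Nat.ceil_lt_add_one (by positivity)).le hb
    _ = a * (b / S) + b := by ring
    _ ≤ a + b := by gcongr; exact mul_le_of_le_one_right ha hbS'

lemma two_mul_add_le_commVolume {n d f : ℝ} {γ : ℕ → ℝ} {Qv Qf : ℕ}
    (hn : 0 ≤ n) (hd : 0 ≤ d) (hf : 0 ≤ f) (hγ : 1 / (Qv : ℝ) ≤ γ Qv) (hQv : 1 ≤ Qv)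
    (hQf : 1 ≤ Qf) : 2 * n * d + 8 * n * f ≤ commVolume n d f γ Qv Qf := by
  have hQv' : (0 : ℝ) < Qv := by exact_mod_cast hQv
  have hQf' : (1 : ℝ) ≤ Qf := by exact_mod_cast hQf
  have hQvγ : 1 ≤ (Qv : ℝ) * γ Qv := by rwa [div_le_iff₀' hQv'] at hγ
  unfold commVolume
  nlinarith [mul_le_mul_of_nonneg_left hQvγ (by positivity : 0 ≤ 8 * n * f),
    mul_le_mul_of_nonneg_left hQf' (by positivity : 0 ≤ 2 * n * d)]

lemma two_mul_max_natCeil_mul_le {n d f S : ℝ} {p : ℕ} (hn : 0 ≤ n) (hd : 0 < d) (hf : 0 ≤ f)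
    (hpf : (p : ℝ) ≤ 4 * f / d) (hcache : 2 * n * d ≤ S) :
    2 * (max p ⌈8 * n * f / S⌉₊ : ℕ) * n * d ≤ 8 * n * f + 2 * n * d := by
  have hpd : (p : ℝ) * d ≤ 4 * f := (le_div_iff₀ hd).mp hpf
  rw [mul_comm 2, mul_assoc, mul_assoc, ← mul_assoc 2, Nat.cast_max,
    max_mul_of_nonneg _ _ (by positivity)]
  refine max_le ?_ (natCeil_div_mul_le (by positivity) (by positivity) hcache)
  nlinarith [mul_nonneg hn hd.le]

theorem two_approximation_general (n d f S : ℝ) (hn : 0 < n) (hd : 0 < d) (hf : 0 < f)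
    (hS : 0 < S) (p : ℕ)
    (hpf : (p : ℝ) ≤ 4 * f / d) (hcache : 2 * n * d ≤ S)
    (γ : ℕ → ℝ) (hγ : ∀ Qv : ℕ, 1 ≤ Qv → 1 / (Qv : ℝ) ≤ γ Qv ∧ γ Qv ≤ 1)
    (hγ1 : γ 1 = 1)
    (g : ℕ → ℕ → ℝ)
    (hg : ∀ Qv Qf : ℕ, g Qv Qf = 2 * (Qf : ℝ) * n * d + 8 * (Qv : ℝ) * n * f * γ Qv) :
    (1 * max p ⌈8 * n * f / S⌉₊ ≥ p ∧
      8 * n * f * γ 1 / (max p ⌈8 * n * f / S⌉₊ : ℝ) ≤ S) ∧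
    g 1 (max p ⌈8 * n * f / S⌉₊) ≤
      2 * sInf {y : ℝ | ∃ Qv Qf : ℕ, 1 ≤ Qv ∧ 1 ≤ Qf ∧ Qv * Qf ≥ p ∧
        8 * n * f * γ Qv / (Qf : ℝ) ≤ S ∧ y = g Qv Qf} := by
  obtain rfl : g = commVolume n d f γ := funext fun Qv => funext (hg Qv)
  set m := max p ⌈8 * n * f / S⌉₊
  have hm : 1 ≤ m := le_max_of_le_right (Nat.one_le_iff_ne_zero.mpr (by positivity))
  have hcover : 1 * m ≥ p := by simp [m]
  have hfits : 8 * n * f * γ 1 / (m : ℝ) ≤ S := by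
    rw [hγ1, mul_one]
    exact div_le_of_natCeil_div_le hS (le_max_right _ _)
  refine ⟨⟨hcover, by rwa [Nat.cast_max] at hfits⟩, ?_⟩
  have hupper : 2 * (m : ℝ) * n * d ≤ 8 * n * f + 2 * n * d :=
    two_mul_max_natCeil_mul_le hn.le hd hf.le hpf hcache
  calc commVolume n d f γ 1 m = 2 * m * n * d + 8 * n * f := by
        simp only [commVolume, hγ1, Nat.cast_one, mul_one]
    _ ≤ 2 * (2 * n * d + 8 * n * f) := by linarith [mul_pos hn hd]
    _ ≤ _ := by
      gcongr
      refine le_csInf ⟨_, 1, m, le_rfl, hm, hcover, hfits, rfl⟩ ?_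
      rintro _ ⟨Qv, Qf, hQv, hQf, -, -, rfl⟩
      exact two_mul_add_le_commVolume hn.le hd.le hf.le (hγ Qv hQv).1 hQv hQf

/-- Theorem 2: feature-only partitioning is a 2-approximation to the
communication minimization problem. -/
theorem two_approximation (n d f S : ℝ) (hn : 0 < n) (hd : 0 < d) (hf : 0 < f)
    (hS : 0 < S) (p : ℕ) (hp : 1 ≤ p)
    (hpf : (p : ℝ) ≤ 4 * f / d) (hcache : 2 * n * d ≤ S)
    (γ : ℕ → ℝ) (hγ : ∀ Qv : ℕ, 1 ≤ Qv → 1 / (Qv : ℝ) ≤ γ Qv ∧ γ Qv ≤ 1)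
    (hγ1 : γ 1 = 1)
    (g : ℕ → ℕ → ℝ)
    (hg : ∀ Qv Qf : ℕ, g Qv Qf = 2 * (Qf : ℝ) * n * d + 8 * (Qv : ℝ) * n * f * γ Qv) :
    (1 * max p ⌈8 * n * f / S⌉₊ ≥ p ∧
      8 * n * f * γ 1 / (max p ⌈8 * n * f / S⌉₊ : ℝ) ≤ S) ∧
    g 1 (max p ⌈8 * n * f / S⌉₊) ≤
      2 * sInf {y : ℝ | ∃ Qv Qf : ℕ, 1 ≤ Qv ∧ 1 ≤ Qf ∧ Qv * Qf ≥ p ∧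
        8 * n * f * γ Qv / (Qf : ℝ) ≤ S ∧ y = g Qv Qf} :=
  two_approximation_general n d f S hn hd hf hS p hpf hcache γ hγ hγ1 g hg
end

section
/- Let η > 1, d ≥ 1 be reals with ε = 1/2 and suppose η = 3. Then for every positive integer p with p ≤ 2.25·d − 3, the sampler speedup T(1)/T(p) with T(p) = 1/(1-(2/3)^p) + (11/2)·d/p and T(1) = 3 + (11/2)·d satisfies T(1)/T(p) ≥ (2/3)·p. -/
/-!
Write `q = (2/3)^p`. Clearing the denominator, the claim becomes `(2/3) p / (1 - q) ≤ 3 + (11/6) d`.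
Since `q ≤ 2/3`, one has `1 / (1 - q) ≤ 1 + 3q`, and `p q ≤ 8/9` for every `p` (the maximum of
`n (2/3)^n` is attained at `n = 2, 3`), so the left side is at most `(2/3) p + 16/9`, which the
hypothesis `p ≤ 2.25 d - 3` bounds by `1.5 d - 2/9`.
-/

lemma nine_mul_mul_two_pow_le (n : ℕ) : 9 * n * 2 ^ n ≤ 8 * 3 ^ n := by
  induction n using Nat.strong_induction_on with
  | _ n ih =>
    match n with
    | 0 | 1 | 2 => norm_num
    | n + 3 =>
      have ihn := ih (n + 2) (by omega)
      calc 9 * (n + 3) * 2 ^ (n + 3) = 2 * (n + 3) * (9 * 2 ^ (n + 2)) := by ring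
        _ ≤ 3 * (n + 2) * (9 * 2 ^ (n + 2)) := Nat.mul_le_mul_right _ (by omega)
        _ = 3 * (9 * (n + 2) * 2 ^ (n + 2)) := by ring
        _ ≤ 3 * (8 * 3 ^ (n + 2)) := Nat.mul_le_mul_left 3 ihn
        _ = 8 * 3 ^ (n + 3) := by ring

lemma natCast_mul_two_thirds_pow_le (n : ℕ) : (n : ℝ) * (2 / 3) ^ n ≤ 8 / 9 := by
  have h : (9 * n * 2 ^ n : ℝ) ≤ 8 * 3 ^ n := by exact_mod_cast nine_mul_mul_two_pow_le n
  rw [div_pow, mul_div_assoc', div_le_div_iff₀ (by positivity) (by norm_num)]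
  linarith

lemma one_div_one_sub_le_one_add_three_mul {q : ℝ} (hq0 : 0 ≤ q) (hq : q ≤ 2 / 3) :
    1 / (1 - q) ≤ 1 + 3 * q := by
  rw [div_le_iff₀ (by linarith)]
  nlinarith

theorem sampler_scalability_special_general (d : ℝ) (p : ℕ) (hp : 1 ≤ p)
    (hple : (p : ℝ) ≤ 2.25 * d - 3) :
    (3 + (11 / 2) * d) / (1 / (1 - (2 / 3 : ℝ) ^ p) + (11 / 2) * d / p)
      ≥ (2 / 3) * p := by
  set q : ℝ := (2 / 3 : ℝ) ^ p
  have hp0 : (0 : ℝ) < p := by exact_mod_cast hp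
  have hq0 : 0 ≤ q := by positivity
  have hq : q ≤ 2 / 3 := pow_le_of_le_one (by norm_num) (by norm_num) (by omega)
  have hpq : (p : ℝ) * q ≤ 8 / 9 := natCast_mul_two_thirds_pow_le p
  have hinv := one_div_one_sub_le_one_add_three_mul hq0 hq
  have hcost : 0 < 1 / (1 - q) + (11 / 2) * d / p := by
    have : 0 < 1 - q := by linarith
    have : 0 ≤ d := by linarith
    positivity
  rw [ge_iff_le, le_div_iff₀ hcost, mul_add, show (2 / 3) * (p : ℝ) * ((11 / 2) * d / p)
    = (11 / 3) * d by field_simp]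
  nlinarith [mul_le_mul_of_nonneg_left hinv hp0.le]

/-- Specialization of the sampler scalability theorem with η = 3 and ε = 1/2. -/
theorem sampler_scalability_special (d : ℝ) (hd : 1 ≤ d) (p : ℕ) (hp : 1 ≤ p)
    (hple : (p : ℝ) ≤ 2.25 * d - 3) :
    (3 + (11 / 2) * d) / (1 / (1 - (2 / 3 : ℝ) ^ p) + (11 / 2) * d / p)
      ≥ (2 / 3) * p :=
  sampler_scalability_special_general d p hp hple
end
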